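/- For all positive integers n and N, ∑ b_{j_1} b_{j_2} ⋯ b_{j_N} = ∑_{k=0}^{N-1} a_k^{(N)}(n) · b_{n-k}, where the sum on the left ranges over all N-tuples (j_1, …, j_N) of nonnegative integers with j_1 + j_2 + ⋯ + j_N = n, and where by convention b_m = 0 for m < 0. -/

import Mathlib

open Polynomial

/-- Bernoulli numbers of the second kind: `b 0 = 1` and for `n ≥ 1`,
`b n = -∑_{k=1}^{n} (-1)^k b_{n-k}/(k+1)`. -/
def bernoulliSnd : ℕ → ℚ
  | 0 => 1
  | n + 1 =>
      -∑ k ∈ Finset.range (n + 1),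
        (-1 : ℚ) ^ (k + 1) * bernoulliSnd (n - k) / (k + 2)
  decreasing_by exact Nat.lt_succ_of_le (Nat.sub_le n k)

/-- Extension of the Bernoulli numbers of the second kind to integer indices,
with `b m = 0` for `m < 0`. -/
def bernoulliSndInt (m : ℤ) : ℚ :=
  if m < 0 then 0 else bernoulliSnd m.toNat

/-- The array of polynomials `a_k^{(N)}(x)` (here `dilcherA N k`): `a_0^{(1)} = 1`,
`a_k^{(N)} = 0` for `k < 0` or `k ≥ N`, and for `N ≥ 2` and `0 ≤ k < N`,
`a_k^{(N)}(x) = -(1/(N-1)) ((x-N+1) a_k^{(N-1)}(x) + (x-N) a_{k-1}^{(N-1)}(x-1))`. -/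
noncomputable def dilcherA : ℕ → ℤ → Polynomial ℚ
  | 0, _ => 0
  | 1, k => if k = 0 then 1 else 0
  | N + 2, k =>
      if 0 ≤ k ∧ k < (N : ℤ) + 2 then
        Polynomial.C (-(1 / ((N : ℚ) + 1))) *
          ((Polynomial.X - Polynomial.C ((N : ℚ) + 1)) * dilcherA (N + 1) k
            + (Polynomial.X - Polynomial.C ((N : ℚ) + 2)) *
                (dilcherA (N + 1) (k - 1)).comp (Polynomial.X - 1))
      else 0

/-! The generating function `B(t) = ∑ b_n tⁿ = t / log(1 + t)` satisfies the Riccati equation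
`t (1 + t) B' = (1 + t) B - B²`, obtained by differentiating `B · (log(1 + t) / t) = 1`.
Consequently `t (1 + t) (Bᴺ)' = N ((1 + t) Bᴺ - Bᴺ⁺¹)`, and comparing coefficients of `tⁿ` gives
a recurrence for `[tⁿ] Bᴺ⁺¹` in terms of `[tⁿ] Bᴺ` and `[tⁿ⁻¹] Bᴺ`, which is exactly the recurrence
defining `a_k^{(N+1)}` evaluated at `x = n`. The left-hand side of the theorem is `[tⁿ] Bᴺ`. -/

namespace PowerSeries

section CommSemiring

variable {R : Type*} [CommSemiring R]

theorem coeff_mk_pow (f : ℕ → R) (N n : ℕ) :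
    coeff n (mk f ^ N) = ∑ j ∈ Finset.Nat.antidiagonalTuple N n, ∏ i : Fin N, f (j i) := by
  rw [← Fin.prod_const, coeff_prod]
  refine Finset.sum_nbij' (fun l => ⇑l) (fun j => Finsupp.equivFunOnFinite.symm j)
    ?_ ?_ (fun _ _ => Finsupp.equivFunOnFinite.symm_apply_apply _)
    (fun _ _ => Finsupp.equivFunOnFinite.apply_symm_apply _) ?_
  · intro l hl
    simpa [Finset.Nat.mem_antidiagonalTuple, Finsupp.sum_fintype] using
      (Finset.mem_finsuppAntidiag.1 hl).1
  · intro j hj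
    simpa [Finset.Nat.mem_antidiagonalTuple] using hj
  · intro l _
    simp

theorem coeff_succ_X_mul_one_add_X_mul_derivative (f : R⟦X⟧) (m : ℕ) :
    coeff (m + 1) (X * (1 + X) * derivative R f) = (m + 1) * coeff (m + 1) f + m * coeff m f := by
  rw [mul_assoc, coeff_succ_X_mul, add_mul, one_mul, map_add, coeff_derivative]
  cases m with
  | zero => simp
  | succ m =>
    rw [coeff_succ_X_mul, coeff_derivative]
    push_cast
    ring

end CommSemiring

section CommRing

variable {R : Type*} [CommRing R]

theorem X_mul_one_add_X_mul_derivative_pow {f : R⟦X⟧}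
    (hf : X * (1 + X) * derivative R f = (1 + X) * f - f ^ 2) (N : ℕ) :
    X * (1 + X) * derivative R (f ^ N) = (N : R⟦X⟧) * ((1 + X) * f ^ N - f ^ (N + 1)) := by
  cases N with
  | zero => simp only [pow_zero, Derivation.map_one_eq_zero, mul_zero, Nat.cast_zero, zero_mul]
  | succ N =>
    rw [derivative_pow, Nat.add_sub_cancel]
    linear_combination ((N + 1 : ℕ) : R⟦X⟧) * f ^ N * hf

theorem natCast_mul_coeff_succ_pow_succ {f : R⟦X⟧}
    (hf : X * (1 + X) * derivative R f = (1 + X) * f - f ^ 2) (N m : ℕ) :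
    N * coeff (m + 1) (f ^ (N + 1)) =
      -((m + 1 - N) * coeff (m + 1) (f ^ N) + (m - N) * coeff m (f ^ N)) := by
  have h := congrArg (coeff (m + 1)) (X_mul_one_add_X_mul_derivative_pow hf N)
  have hlin : coeff (m + 1) ((1 + X) * f ^ N) = coeff (m + 1) (f ^ N) + coeff m (f ^ N) := by
    rw [add_mul, one_mul, map_add, coeff_succ_X_mul]
  rw [coeff_succ_X_mul_one_add_X_mul_derivative, ← map_natCast (C (R := R)), coeff_C_mul,
    map_sub, hlin] at h
  linear_combination h

end CommRing

end PowerSeries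

section BernoulliSndSeries

open PowerSeries

noncomputable def bernoulliSndSeries : ℚ⟦X⟧ := mk bernoulliSnd

/-- The series `log(1 + t) / t`. -/
noncomputable def logOneAddDivX : ℚ⟦X⟧ := mk fun k => (-1) ^ k / (k + 1)

theorem bernoulliSndSeries_mul_logOneAddDivX : bernoulliSndSeries * logOneAddDivX = 1 := by
  ext n
  rw [PowerSeries.coeff_mul, Finset.Nat.sum_antidiagonal_eq_sum_range_succ_mk]
  cases n with
  | zero => simp [bernoulliSndSeries, logOneAddDivX, bernoulliSnd]
  | succ n =>
    simp only [bernoulliSndSeries, logOneAddDivX, coeff_mk, PowerSeries.coeff_one]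
    rw [Finset.sum_range_succ, ← Finset.sum_range_reflect, bernoulliSnd]
    have hterm : ∀ j ∈ Finset.range (n + 1), bernoulliSnd (n + 1 - 1 - j) *
        ((-1 : ℚ) ^ (n + 1 - (n + 1 - 1 - j)) / ((n + 1 - (n + 1 - 1 - j) : ℕ) + 1)) =
          (-1) ^ (j + 1) * bernoulliSnd (n - j) / (j + 2) := by
      intro j hj
      rw [show n + 1 - 1 - j = n - j by omega,
        show n + 1 - (n - j) = j + 1 by have := Finset.mem_range.1 hj; omega]
      push_cast
      ring
    rw [Finset.sum_congr rfl hterm]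
    simp

theorem X_mul_one_add_X_mul_derivative_logOneAddDivX :
    PowerSeries.X * (1 + PowerSeries.X) * derivative ℚ logOneAddDivX =
      1 - (1 + PowerSeries.X) * logOneAddDivX := by
  ext n
  cases n with
  | zero => simp [logOneAddDivX, mul_assoc, add_mul, coeff_zero_X_mul]
  | succ m =>
    rw [coeff_succ_X_mul_one_add_X_mul_derivative]
    simp only [logOneAddDivX, coeff_mk, map_sub, add_mul, map_add, one_mul, coeff_succ_X_mul,
      PowerSeries.coeff_one, Nat.succ_ne_zero, if_false]
    push_cast
    field_simp
    ring

theorem X_mul_one_add_X_mul_derivative_bernoulliSndSeries :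
    PowerSeries.X * (1 + PowerSeries.X) * derivative ℚ bernoulliSndSeries =
      (1 + PowerSeries.X) * bernoulliSndSeries - bernoulliSndSeries ^ 2 := by
  have hinv : bernoulliSndSeries = logOneAddDivX⁻¹ :=
    (PowerSeries.eq_inv_iff_mul_eq_one (by simp [logOneAddDivX])).2
      bernoulliSndSeries_mul_logOneAddDivX
  have hderiv : derivative ℚ bernoulliSndSeries =
      -bernoulliSndSeries ^ 2 * derivative ℚ logOneAddDivX := by
    rw [hinv, derivative_inv']
  rw [hderiv]
  linear_combination (-bernoulliSndSeries ^ 2) * X_mul_one_add_X_mul_derivative_logOneAddDivX +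
    ((1 + PowerSeries.X) * bernoulliSndSeries) * bernoulliSndSeries_mul_logOneAddDivX

end BernoulliSndSeries

theorem dilcherA_eq_zero {N : ℕ} {k : ℤ} (hk : k < 0 ∨ (N : ℤ) ≤ k) : dilcherA N k = 0 := by
  match N with
  | 0 => rw [dilcherA]
  | 1 => rw [dilcherA, if_neg (by omega)]
  | N + 2 => rw [dilcherA, if_neg (by push_cast at hk; omega)]

/-- Both sides vanish outside the range `N ≥ 1`, `0 ≤ k ≤ N` where the definition applies. -/
theorem natCast_mul_eval_dilcherA_succ (N : ℕ) (k : ℤ) (x : ℚ) :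
    N * (dilcherA (N + 1) k).eval x =
      -((x - N) * (dilcherA N k).eval x + (x - N - 1) * (dilcherA N (k - 1)).eval (x - 1)) := by
  cases N with
  | zero => simp [dilcherA]
  | succ N =>
    rw [dilcherA]
    split_ifs with hk
    · simp only [eval_mul, eval_add, eval_sub, eval_C, eval_X, eval_comp, eval_one]
      field_simp
      push_cast
      ring
    · rw [dilcherA_eq_zero (by omega), dilcherA_eq_zero (k := k - 1) (by omega)]
      simp

theorem eval_dilcherA_zero_zero {N : ℕ} (hN : 1 ≤ N) : (dilcherA N 0).eval 0 = 1 := by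
  induction N, hN using Nat.le_induction with
  | base => simp [dilcherA]
  | succ N hN ih =>
    have hrec := natCast_mul_eval_dilcherA_succ N 0 0
    rw [ih, dilcherA_eq_zero (k := 0 - 1) (by omega), eval_zero] at hrec
    have hN0 : (N : ℚ) ≠ 0 := by positivity
    exact mul_left_cancel₀ hN0 (by linear_combination hrec)

theorem bernoulliSndInt_natCast (n : ℕ) : bernoulliSndInt n = bernoulliSnd n := by
  simp [bernoulliSndInt]

theorem bernoulliSndInt_of_neg {m : ℤ} (hm : m < 0) : bernoulliSndInt m = 0 := by
  simp [bernoulliSndInt, hm]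

noncomputable def dilcherSum (N n : ℕ) : ℚ :=
  ∑ k ∈ Finset.range N, (dilcherA N k).eval (n : ℚ) * bernoulliSndInt (n - k)

theorem dilcherSum_one (n : ℕ) : dilcherSum 1 n = bernoulliSnd n := by
  simp [dilcherSum, dilcherA, bernoulliSndInt_natCast]

theorem dilcherSum_zero_right {N : ℕ} (hN : 1 ≤ N) : dilcherSum N 0 = 1 := by
  rw [dilcherSum, Finset.sum_eq_single_of_mem 0 (Finset.mem_range.2 hN)]
  · simp [eval_dilcherA_zero_zero hN, bernoulliSndInt, bernoulliSnd]
  · intro k _ hk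
    rw [bernoulliSndInt_of_neg (by omega), mul_zero]

theorem dilcherSum_eq_sum_range_succ (N n : ℕ) :
    dilcherSum N n =
      ∑ k ∈ Finset.range (N + 1), (dilcherA N k).eval (n : ℚ) * bernoulliSndInt (n - k) := by
  rw [Finset.sum_range_succ, dilcherA_eq_zero (Or.inr le_rfl), eval_zero, zero_mul, add_zero,
    dilcherSum]

theorem dilcherSum_eq_sum_range_succ_sub_one (N n : ℕ) :
    dilcherSum N n =
      ∑ k ∈ Finset.range (N + 1),
        (dilcherA N (k - 1)).eval (n : ℚ) * bernoulliSndInt (n + 1 - k) := by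
  rw [Finset.sum_range_succ', dilcherA_eq_zero (by omega), eval_zero, zero_mul, add_zero,
    dilcherSum]
  push_cast
  simp only [add_sub_cancel_right, add_sub_add_right_eq_sub]

theorem natCast_mul_dilcherSum_succ_succ (N m : ℕ) :
    N * dilcherSum (N + 1) (m + 1) =
      -((m + 1 - N) * dilcherSum N (m + 1) + (m - N) * dilcherSum N m) := by
  rw [dilcherSum_eq_sum_range_succ N, dilcherSum_eq_sum_range_succ_sub_one N, dilcherSum,
    Finset.mul_sum, Finset.mul_sum, Finset.mul_sum, ← Finset.sum_add_distrib,
    ← Finset.sum_neg_distrib]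
  refine Finset.sum_congr rfl fun k _ => ?_
  rw [← mul_assoc, natCast_mul_eval_dilcherA_succ]
  push_cast
  rw [add_sub_cancel_right]
  ring

theorem coeff_bernoulliSndSeries_pow {N : ℕ} (hN : 1 ≤ N) (n : ℕ) :
    PowerSeries.coeff n (bernoulliSndSeries ^ N) = dilcherSum N n := by
  induction N, hN using Nat.le_induction generalizing n with
  | base => rw [pow_one, dilcherSum_one, bernoulliSndSeries, PowerSeries.coeff_mk]
  | succ N hN ih =>
    cases n with
    | zero =>
      rw [dilcherSum_zero_right (by omega), PowerSeries.coeff_zero_eq_constantCoeff, map_pow]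
      simp [bernoulliSndSeries, bernoulliSnd]
    | succ m =>
      have hN0 : (N : ℚ) ≠ 0 := by positivity
      refine mul_left_cancel₀ hN0 ?_
      rw [PowerSeries.natCast_mul_coeff_succ_pow_succ
        X_mul_one_add_X_mul_derivative_bernoulliSndSeries, natCast_mul_dilcherSum_succ_succ,
        ih, ih]

theorem sum_prod_bernoulliSnd_general (n N : ℕ) (hN : 0 < N) :
    ∑ j ∈ Finset.Nat.antidiagonalTuple N n, ∏ i : Fin N, bernoulliSnd (j i) =
      ∑ k ∈ Finset.range N,
        (dilcherA N (k : ℤ)).eval (n : ℚ) * bernoulliSndInt ((n : ℤ) - (k : ℤ)) := by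
  rw [← PowerSeries.coeff_mk_pow]
  exact coeff_bernoulliSndSeries_pow hN n

theorem sum_prod_bernoulliSnd (n N : ℕ) (hn : 0 < n) (hN : 0 < N) :
    ∑ j ∈ Finset.Nat.antidiagonalTuple N n, ∏ i : Fin N, bernoulliSnd (j i) =
      ∑ k ∈ Finset.range N,
        (dilcherA N (k : ℤ)).eval (n : ℚ) * bernoulliSndInt ((n : ℤ) - (k : ℤ)) :=
  sum_prod_bernoulliSnd_general n N hN
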